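/- arXiv:2511.16401 — 3 statements merged into one kernel-verified Lean document; each statement's English description precedes it below -/
import Mathlib

section
/- Let H : (0,∞) → M_N(ℂ) be a smooth path of positive definite Hermitian N×N matrices which is negatively curved (H''(t) − H'(t) H(t)⁻¹ H'(t) positive semidefinite for all t > 0) and has moderate growth, i.e. there is C > 0 with H(t) ⪯ e^{Ct} H(1) in the Loewner order for all t ≥ 1. Then for every nonzero s ∈ ℂ^N the limit χ_H(s) := −lim_{t→∞} (1/t) · log(s* H(t) s) exists, is a real number, and satisfies χ_H(s) ≥ −C; moreover for fixed nonzero s the difference quotients t ↦ (log(s* H(t) s) − log(s* H(1) s))/(t − 1) are nondecreasing on (1, ∞). -/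
open scoped ComplexOrder

open Matrix Filter

lemma cs_aux {n : ℕ} (A B : Matrix (Fin n) (Fin n) ℂ) (hA : A.PosDef) (hB : B.IsHermitian)
    (s : Fin n → ℂ) (hc : 0 < (dotProduct (star s) (A.mulVec s)).re) :
    ((dotProduct (star s) (B.mulVec s)).re)^2 ≤
      (dotProduct (star s) ((B * A⁻¹ * B).mulVec s)).re * (dotProduct (star s) (A.mulVec s)).re := by
  have hMs : (A⁻¹).PosSemidef := hA.inv.posSemidef
  have hinv : A⁻¹ * A = 1 := Matrix.nonsing_inv_mul A hA.det_pos.ne'.isUnit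
  have hinv' : A * A⁻¹ = 1 := Matrix.mul_nonsing_inv A hA.det_pos.ne'.isUnit
  set u := B.mulVec s with hu
  set v := A.mulVec s with hv
  have hsu : star u = vecMul (star s) B := by rw [hu, Matrix.star_mulVec, hB.eq]
  have hsv : star v = vecMul (star s) A := by rw [hv, Matrix.star_mulVec, hA.1.eq]
  have hiv : A⁻¹.mulVec v = s := by
    rw [hv, Matrix.mulVec_mulVec, hinv, Matrix.one_mulVec]
  have h1 : dotProduct (star u) (A⁻¹.mulVec u) = dotProduct (star s) ((B * A⁻¹ * B).mulVec s) := by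
    rw [hsu, ← Matrix.dotProduct_mulVec, hu, Matrix.mulVec_mulVec, Matrix.mulVec_mulVec,
      Matrix.mul_assoc]
  have h2 : dotProduct (star u) (A⁻¹.mulVec v) = dotProduct (star s) (B.mulVec s) := by
    rw [hsu, ← Matrix.dotProduct_mulVec, hiv]
  have h3 : dotProduct (star v) (A⁻¹.mulVec u) = dotProduct (star s) (B.mulVec s) := by
    rw [hsv, ← Matrix.dotProduct_mulVec, hu, Matrix.mulVec_mulVec, Matrix.mulVec_mulVec,
      hinv', Matrix.one_mul]
  have h4 : dotProduct (star v) (A⁻¹.mulVec v) = dotProduct (star s) (A.mulVec s) := by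
    rw [hsv, ← Matrix.dotProduct_mulVec, hiv]
  set a' := dotProduct (star s) ((B * A⁻¹ * B).mulVec s) with ha'
  set b' := dotProduct (star s) (B.mulVec s) with hb'
  set c' := dotProduct (star s) (A.mulVec s) with hc'
  set l : ℝ := b'.re / c'.re with hl
  set w := u - (l : ℂ) • v with hw
  have hnn : 0 ≤ (dotProduct (star w) (A⁻¹.mulVec w)).re := by
    simpa using hMs.re_dotProduct_nonneg w
  have expand : dotProduct (star w) (A⁻¹.mulVec w)
      = a' - (l:ℂ) * b' - (l:ℂ) * b' + (l:ℂ) * ((l:ℂ) * c') := by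
    have hsw : star w = star u - (l : ℂ) • star v := by
      rw [hw, star_sub, star_smul]; simp
    rw [hw, Matrix.mulVec_sub, hsw]
    rw [show A⁻¹.mulVec ((l:ℂ) • v) = (l:ℂ) • A⁻¹.mulVec v from Matrix.mulVec_smul ..]
    simp only [sub_dotProduct, dotProduct_sub, smul_dotProduct,
      dotProduct_smul, smul_eq_mul, h1, h2, h3, h4]
    ring
  have hre : (dotProduct (star w) (A⁻¹.mulVec w)).re
      = a'.re - 2 * l * b'.re + l ^ 2 * c'.re := by
    rw [expand]
    simp [Complex.add_re, Complex.sub_re, Complex.mul_re, Complex.mul_im,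
      Complex.ofReal_re, Complex.ofReal_im]
    ring
  rw [hre] at hnn
  have hlc : l * c'.re = b'.re := by rw [hl]; exact div_mul_cancel₀ _ hc.ne'
  have h6 : l ^ 2 * c'.re = l * b'.re := by rw [pow_two, mul_assoc, hlc]
  have h5 : l * b'.re ≤ a'.re := by linarith
  calc b'.re ^ 2 = c'.re * (l * b'.re) := by rw [← hlc]; ring
    _ ≤ c'.re * a'.re := mul_le_mul_of_nonneg_left h5 hc.le
    _ = a'.re * c'.re := mul_comm _ _

lemma quad_hasDerivAt {n : ℕ} (s : Fin n → ℂ) {A : ℝ → Matrix (Fin n) (Fin n) ℂ}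
    {A' : Matrix (Fin n) (Fin n) ℂ} {t : ℝ}
    (h : ∀ i j, HasDerivAt (fun u => A u i j) (A' i j) t) :
    HasDerivAt (fun u => (dotProduct (star s) ((A u).mulVec s)).re)
      (dotProduct (star s) (A'.mulVec s)).re t := by
  have key : HasDerivAt (fun u => ∑ i, ∑ j, star s i * (A u i j * s j))
      (∑ i, ∑ j, star s i * (A' i j * s j)) t :=
    HasDerivAt.fun_sum fun i _ => HasDerivAt.fun_sum fun j _ =>
      ((h i j).mul_const (s j)).const_mul (star s i)
  have key2 : HasDerivAt (fun u => dotProduct (star s) ((A u).mulVec s))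
      (dotProduct (star s) (A'.mulVec s)) t := by
    have e : ∀ B : Matrix (Fin n) (Fin n) ℂ, dotProduct (star s) (B.mulVec s)
        = ∑ i, ∑ j, star s i * (B i j * s j) := by
      intro B; simp [dotProduct, Matrix.mulVec, Finset.mul_sum]
    simp only [e]; exact key
  have := (Complex.reCLM.hasFDerivAt
      (x := dotProduct (star s) ((A t).mulVec s))).comp_hasDerivAt t key2
  simpa [Function.comp_def] using this

/-- Let `H : (0,∞) → M_N(ℂ)` be a smooth path of positive definite
Hermitian matrices (with entrywise derivatives `H'`, `H''`), negatively curved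
(`H''(t) - H'(t) H(t)⁻¹ H'(t)` positive semidefinite for all `t > 0`), with moderate
growth: `H(t) ⪯ e^{Ct} H(1)` in the Loewner order for all `t ≥ 1`, where `C > 0`.
Then for every nonzero `s ∈ ℂ^N` the limit `χ_H(s) := -lim_{t→∞} (1/t) log (s* H(t) s)`
exists, is a real number `≥ -C`, and the difference quotients
`t ↦ (log (s* H(t) s) - log (s* H(1) s)) / (t - 1)` are nondecreasing on `(1,∞)`. -/
theorem statement1 (N : ℕ)
    (H H' H'' : ℝ → Matrix (Fin N) (Fin N) ℂ)
    (hsmooth : ∀ i j, ContDiffOn ℝ (⊤ : ℕ∞) (fun u => H u i j) (Set.Ioi (0 : ℝ)))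
    (hpos : ∀ t ∈ Set.Ioi (0 : ℝ), (H t).PosDef)
    (hd1 : ∀ t ∈ Set.Ioi (0 : ℝ), ∀ i j, HasDerivAt (fun u => H u i j) (H' t i j) t)
    (hd2 : ∀ t ∈ Set.Ioi (0 : ℝ), ∀ i j, HasDerivAt (fun u => H' u i j) (H'' t i j) t)
    (hcurv : ∀ t ∈ Set.Ioi (0 : ℝ), (H'' t - H' t * (H t)⁻¹ * H' t).PosSemidef)
    (C : ℝ) (hC : 0 < C)
    (hgrow : ∀ t ≥ (1 : ℝ), (Real.exp (C * t) • H 1 - H t).PosSemidef)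
    (s : Fin N → ℂ) (hs : s ≠ 0) :
    (∃ L : ℝ,
        Filter.Tendsto
          (fun t : ℝ =>
            -((1 / t) * Real.log ((dotProduct (star s) ((H t).mulVec s)).re)))
          Filter.atTop (nhds L) ∧ -C ≤ L) ∧
      MonotoneOn
        (fun t : ℝ =>
          (Real.log ((dotProduct (star s) ((H t).mulVec s)).re) -
              Real.log ((dotProduct (star s) ((H 1).mulVec s)).re)) / (t - 1))
        (Set.Ioi (1 : ℝ)) := by
  classical
  set q : ℝ → ℝ := fun t => (dotProduct (star s) ((H t).mulVec s)).re with hqdef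
  set q1 : ℝ → ℝ := fun t => (dotProduct (star s) ((H' t).mulVec s)).re with hq1def
  set q2 : ℝ → ℝ := fun t => (dotProduct (star s) ((H'' t).mulVec s)).re with hq2def
  have hqpos : ∀ t ∈ Set.Ioi (0 : ℝ), 0 < q t := by
    intro t ht
    simpa using (hpos t ht).re_dotProduct_pos hs
  -- H' is Hermitian on Ioi 0
  have hherm : ∀ t ∈ Set.Ioi (0 : ℝ), (H' t).IsHermitian := by
    intro t ht
    apply Matrix.ext
    intro i j
    rw [Matrix.conjTranspose_apply]
    have e1 : HasDerivAt (fun u => H u i j) (H' t i j) t := hd1 t ht i j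
    have e2 : HasDerivAt (fun u => star (H u j i)) (star (H' t j i)) t := (hd1 t ht j i).star
    have hev : (fun u => star (H u j i)) =ᶠ[nhds t] (fun u => H u i j) :=
      Filter.eventuallyEq_of_mem (isOpen_Ioi.mem_nhds ht) (fun u hu => (hpos u hu).1.apply i j)
    exact (e2.congr_of_eventuallyEq hev.symm).unique e1
  -- derivatives
  have hQ : ∀ t ∈ Set.Ioi (0 : ℝ), HasDerivAt q (q1 t) t := by
    intro t ht; exact quad_hasDerivAt s (hd1 t ht)
  have hQ1 : ∀ t ∈ Set.Ioi (0 : ℝ), HasDerivAt q1 (q2 t) t := by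
    intro t ht; exact quad_hasDerivAt s (hd2 t ht)
  set f : ℝ → ℝ := fun t => Real.log (q t) with hfdef
  have hF : ∀ t ∈ Set.Ioi (0 : ℝ), HasDerivAt f (q1 t / q t) t := by
    intro t ht; exact (hQ t ht).log (hqpos t ht).ne'
  set φ : ℝ → ℝ := fun t => q1 t / q t with hφdef
  have hΦ : ∀ t ∈ Set.Ioi (0 : ℝ),
      HasDerivAt φ ((q2 t * q t - q1 t * q1 t) / q t ^ 2) t := by
    intro t ht; exact (hQ1 t ht).div (hQ t ht) (hqpos t ht).ne'
  -- numerator nonneg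
  have hnum : ∀ t ∈ Set.Ioi (0 : ℝ), 0 ≤ q2 t * q t - q1 t * q1 t := by
    intro t ht
    have hcs := cs_aux (H t) (H' t) (hpos t ht) (hherm t ht) s (hqpos t ht)
    have hle : (dotProduct (star s) ((H' t * (H t)⁻¹ * H' t).mulVec s)).re ≤ q2 t := by
      have h0 := (hcurv t ht).re_dotProduct_nonneg s
      simp only [Matrix.sub_mulVec, dotProduct_sub, map_sub, RCLike.re_to_complex,
        Complex.sub_re] at h0
      simpa [hq2def] using sub_nonneg.mp h0
    have hqt : 0 < q t := hqpos t ht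
    nlinarith [hcs, hle, hqt, sq_nonneg (q1 t)]
  have hderiv_eq : ∀ t ∈ Set.Ioi (0 : ℝ), deriv f =ᶠ[nhds t] φ := by
    intro t ht
    exact Filter.eventuallyEq_of_mem (isOpen_Ioi.mem_nhds ht) (fun u hu => (hF u hu).deriv)
  -- convexity of f on Ioi 0
  have hconv : ConvexOn ℝ (Set.Ioi (0 : ℝ)) f := by
    apply convexOn_of_deriv2_nonneg (convex_Ioi 0)
    · intro t ht; exact (hF t ht).continuousAt.continuousWithinAt
    · rw [interior_Ioi]; intro t ht
      exact (hF t ht).differentiableAt.differentiableWithinAt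
    · rw [interior_Ioi]; intro t ht
      exact (((hderiv_eq t ht).differentiableAt_iff).mpr
        (hΦ t ht).differentiableAt).differentiableWithinAt
    · rw [interior_Ioi]; intro t ht
      have e2 : deriv^[2] f t = deriv (deriv f) t := by
        simp [Function.iterate_succ_apply', Function.iterate_zero_apply]
      rw [e2, (hderiv_eq t ht).deriv_eq, (hΦ t ht).deriv]
      exact div_nonneg (hnum t ht) (sq_nonneg _)
  -- monotonicity of slopes
  have hmono : MonotoneOn (fun t : ℝ => (f t - f 1) / (t - 1)) (Set.Ioi (1 : ℝ)) := by
    intro x hx y hy hxy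
    exact hconv.secant_mono (Set.mem_Ioi.2 one_pos)
      (Set.mem_Ioi.2 (lt_trans one_pos hx)) (Set.mem_Ioi.2 (lt_trans one_pos hy))
      (ne_of_gt hx) (ne_of_gt hy) hxy
  set g : ℝ → ℝ := fun t => (f t - f 1) / (t - 1) with hgdef
  -- growth estimate
  have hgrowth : ∀ t ≥ (1 : ℝ), f t ≤ C * t + f 1 := by
    intro t ht
    have ht0 : (0:ℝ) < t := lt_of_lt_of_le one_pos ht
    have h0 := (hgrow t ht).re_dotProduct_nonneg s
    have hqt : q t ≤ Real.exp (C * t) * q 1 := by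
      simp only [Matrix.sub_mulVec, dotProduct_sub, Matrix.smul_mulVec,
        dotProduct_smul, RCLike.re_to_complex, Complex.sub_re, Complex.real_smul,
        Complex.mul_re, Complex.ofReal_re, Complex.ofReal_im] at h0
      have := sub_nonneg.mp (by linarith [h0] : (0:ℝ) ≤
        Real.exp (C * t) * q 1 - q t)
      linarith
    calc f t = Real.log (q t) := rfl
      _ ≤ Real.log (Real.exp (C * t) * q 1) := by
          apply Real.log_le_log (hqpos t (Set.mem_Ioi.2 ht0)) hqt
      _ = C * t + f 1 := by
          rw [Real.log_mul (Real.exp_ne_zero _) (hqpos 1 (Set.mem_Ioi.2 one_pos)).ne',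
            Real.log_exp]
  -- the auxiliary tendsto
  have htendC : Filter.Tendsto (fun u : ℝ => C * u / (u - 1)) Filter.atTop (nhds C) := by
    have h1 : Filter.Tendsto (fun u : ℝ => C / (1 - u⁻¹)) Filter.atTop (nhds (C / (1 - 0))) :=
      Filter.Tendsto.div tendsto_const_nhds
        (Filter.Tendsto.sub tendsto_const_nhds tendsto_inv_atTop_zero) (by norm_num)
    have h2 : (fun u : ℝ => C / (1 - u⁻¹)) =ᶠ[Filter.atTop] (fun u : ℝ => C * u / (u - 1)) := by
      filter_upwards [Filter.eventually_gt_atTop (1:ℝ)] with u hu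
      have hu0 : u ≠ 0 := by positivity
      have hu1 : u - 1 ≠ 0 := by intro h; rw [sub_eq_zero] at h; exact (ne_of_gt hu) h
      field_simp
    simpa using h1.congr' h2
  -- bound g ≤ C on Ioi 1
  have hgC : ∀ t ∈ Set.Ioi (1 : ℝ), g t ≤ C := by
    intro t ht
    refine ge_of_tendsto htendC ?_
    filter_upwards [Filter.eventually_ge_atTop t, Filter.eventually_gt_atTop (1:ℝ)] with u hut hu1
    have hmem : u ∈ Set.Ioi (1:ℝ) := Set.mem_Ioi.2 hu1
    have hgu : g u ≤ C * u / (u - 1) := by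
      have hfu := hgrowth u hu1.le
      have hu1' : (0:ℝ) < u - 1 := by linarith
      have : (f u - f 1) / (u - 1) ≤ (C * u) / (u - 1) :=
        (div_le_div_iff_of_pos_right hu1').mpr (by linarith)
      simpa [hgdef] using this
    exact le_trans (hmono ht hmem hut) hgu
  -- sup of g
  have hne : (g '' Set.Ioi (1:ℝ)).Nonempty := ⟨g 2, ⟨2, by norm_num, rfl⟩⟩
  have hbdd : BddAbove (g '' Set.Ioi (1:ℝ)) := by
    refine ⟨C, ?_⟩
    rintro y ⟨x, hx, rfl⟩
    exact hgC x hx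
  set L' : ℝ := sSup (g '' Set.Ioi (1:ℝ)) with hL'def
  have hL'C : L' ≤ C := csSup_le hne (by rintro y ⟨x, hx, rfl⟩; exact hgC x hx)
  -- g tends to L'
  have htendg : Filter.Tendsto g Filter.atTop (nhds L') := by
    rw [tendsto_order]
    constructor
    · intro a ha
      obtain ⟨y, hy, hay⟩ := exists_lt_of_lt_csSup hne ha
      obtain ⟨x, hx, rfl⟩ := hy
      filter_upwards [Filter.eventually_ge_atTop x, Filter.eventually_gt_atTop (1:ℝ)]
        with u hux hu1
      exact lt_of_lt_of_le hay (hmono hx (Set.mem_Ioi.2 hu1) hux)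
    · intro a ha
      filter_upwards [Filter.eventually_gt_atTop (1:ℝ)] with u hu1
      exact lt_of_le_of_lt (le_csSup hbdd ⟨u, Set.mem_Ioi.2 hu1, rfl⟩) ha
  -- (t-1)/t → 1
  have htend1 : Filter.Tendsto (fun t : ℝ => (t - 1) / t) Filter.atTop (nhds 1) := by
    have h1 : Filter.Tendsto (fun t : ℝ => 1 - t⁻¹) Filter.atTop (nhds (1 - 0)) :=
      Filter.Tendsto.sub tendsto_const_nhds tendsto_inv_atTop_zero
    have h2 : (fun t : ℝ => 1 - t⁻¹) =ᶠ[Filter.atTop] (fun t : ℝ => (t - 1) / t) := by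
      filter_upwards [Filter.eventually_gt_atTop (0:ℝ)] with t ht
      field_simp
    simpa using h1.congr' h2
  have htend0 : Filter.Tendsto (fun t : ℝ => f 1 / t) Filter.atTop (nhds 0) := by
    simpa using tendsto_inv_atTop_zero.const_mul (f 1) |>.congr (fun t => by
      rw [div_eq_mul_inv, mul_comm])
  -- f t / t → L'
  have htendf : Filter.Tendsto (fun t : ℝ => f t / t) Filter.atTop (nhds L') := by
    have h1 : Filter.Tendsto (fun t : ℝ => g t * ((t - 1) / t) + f 1 / t)
        Filter.atTop (nhds (L' * 1 + 0)) := (htendg.mul htend1).add htend0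
    have h2 : (fun t : ℝ => g t * ((t - 1) / t) + f 1 / t)
        =ᶠ[Filter.atTop] (fun t : ℝ => f t / t) := by
      filter_upwards [Filter.eventually_gt_atTop (1:ℝ)] with t ht
      have ht0 : t ≠ 0 := by positivity
      have ht1 : t - 1 ≠ 0 := by intro h; rw [sub_eq_zero] at h; exact (ne_of_gt ht) h
      simp only [hgdef]
      field_simp
      ring
    simpa using h1.congr' h2
  refine ⟨⟨-L', ?_, by linarith⟩, hmono⟩
  have := htendf.neg
  exact this.congr (fun t => by rw [hfdef]; ring)
end

section
/- Let V be a finite-dimensional complex inner product space, A a self-adjoint endomorphism of V, and χ_A the limit non-Archimedean norm of the associated geodesic ray, i.e. χ_A(v) = −lim_{t→∞} (1/t) · log ⟨exp(−tA) v, v⟩ for nonzero v and χ_A(0) = +∞. Then for every λ ∈ ℝ the set {v ∈ V : χ_A(v) ≥ λ} equals the subspace ⨁_{μ ≥ λ} ker(A − μ·id), the sum of the eigenspaces of A for eigenvalues μ ≥ λ. -/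
/-!
In an orthonormal eigenbasis `(bᵢ)` of `A` with eigenvalues `αᵢ`,
`⟨exp(-tA) v, v⟩ = ∑ |⟨bᵢ, v⟩|² e^{-t αᵢ}`, a positive combination of exponentials whose decay
rate is the least `αᵢ` with `⟨bᵢ, v⟩ ≠ 0`. Hence `χ_A(v) ≥ λ` exactly when `v` has no component
along eigenvectors of eigenvalue `< λ`, i.e. when `v` lies in the sum of the eigenspaces for
eigenvalues `μ ≥ λ`.
-/

open Filter Topology

section Exponential

open NormedSpace

variable {𝕂 E : Type*} [RCLike 𝕂] [NormedAddCommGroup E] [NormedSpace 𝕂 E] [CompleteSpace E]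

theorem ContinuousLinearMap.exp_apply_of_apply_eq_smul {B : E →L[𝕂] E} {v : E} {c : 𝕂}
    (h : B v = c • v) : exp B v = exp c • v := by
  have hpow : ∀ n : ℕ, (B ^ n) v = c ^ n • v := by
    intro n
    induction n with
    | zero => simp
    | succ n ih => rw [pow_succ, mul_apply_eq_comp, h, map_smul, ih, smul_smul, pow_succ']
  have hB := (apply 𝕂 E v).hasSum (exp_series_hasSum_exp' (𝕂 := 𝕂) B)
  have hc := (exp_series_hasSum_exp' (𝕂 := 𝕂) c).smul_const v
  simp only [apply_apply, smul_apply, hpow, smul_assoc] at hB hc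
  exact hB.unique hc

theorem ContinuousLinearMap.exp_ofReal_smul_apply_of_apply_eq_smul {B : E →L[𝕂] E} {v : E}
    {a : ℝ} (h : B v = (a : 𝕂) • v) (t : ℝ) :
    exp ((t : 𝕂) • B) v = (Real.exp (t * a) : 𝕂) • v := by
  have htB : ((t : 𝕂) • B) v = ((t * a : ℝ) : 𝕂) • v := by
    rw [smul_apply, h, smul_smul, RCLike.ofReal_mul]
  rw [exp_apply_of_apply_eq_smul htB, ← RCLike.algebraMap_eq_ofReal,
    Real.exp_eq_exp_ℝ, algebraMap_exp_comm]

end Exponential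

section LogSumExp

open Real

theorem tendsto_neg_inv_mul_log_mul_exp {c : ℝ} (hc : 0 < c) (m : ℝ) :
    Tendsto (fun t : ℝ => -((1 / t) * log (c * exp (-t * m)))) atTop (𝓝 m) := by
  have hlim : Tendsto (fun t : ℝ => m - log c * t⁻¹) atTop (𝓝 m) := by
    simpa using tendsto_const_nhds.sub (tendsto_inv_atTop_zero.const_mul (log c))
  refine hlim.congr' ?_
  filter_upwards [eventually_ne_atTop 0] with t ht
  rw [log_mul hc.ne' (exp_ne_zero _), log_exp]
  field_simp
  ring

theorem tendsto_neg_inv_mul_log_sum_mul_exp {ι : Type*} [Fintype ι] {w α : ι → ℝ}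
    (hw : ∀ i, 0 ≤ w i) {m : ℝ} (hm : IsLeast (α '' {i | w i ≠ 0}) m) :
    Tendsto (fun t : ℝ => -((1 / t) * log (∑ i, w i * exp (-t * α i)))) atTop (𝓝 m) := by
  obtain ⟨⟨i₀, hi₀, rfl⟩, hmin⟩ := hm
  have hw₀ : 0 < w i₀ := (hw i₀).lt_of_ne' hi₀
  have hC : 0 < ∑ i, w i :=
    hw₀.trans_le (Finset.single_le_sum (fun i _ => hw i) (Finset.mem_univ _))
  have hlower : ∀ t, w i₀ * exp (-t * α i₀) ≤ ∑ i, w i * exp (-t * α i) := fun t =>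
    Finset.single_le_sum (f := fun i => w i * exp (-t * α i))
      (fun i _ => mul_nonneg (hw i) (exp_nonneg _)) (Finset.mem_univ i₀)
  have hupper : ∀ t, 0 ≤ t → ∑ i, w i * exp (-t * α i) ≤ (∑ i, w i) * exp (-t * α i₀) := by
    intro t ht
    rw [Finset.sum_mul]
    refine Finset.sum_le_sum fun i _ => ?_
    rcases eq_or_ne (w i) 0 with hi | hi
    · simp [hi]
    · exact mul_le_mul_of_nonneg_left
        (exp_le_exp.mpr (by nlinarith [hmin ⟨i, hi, rfl⟩])) (hw i)
  refine tendsto_of_tendsto_of_tendsto_of_le_of_le' (tendsto_neg_inv_mul_log_mul_exp hC _)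
    (tendsto_neg_inv_mul_log_mul_exp hw₀ _) ?_ ?_
  all_goals
    filter_upwards [eventually_gt_atTop 0] with t ht
    gcongr
  · exact (mul_pos hw₀ (exp_pos _)).trans_le (hlower t)
  · exact hupper t ht.le
  · exact hlower t

end LogSumExp

namespace LinearMap.IsSymmetric

open NormedSpace Module.End

variable {𝕜 E : Type*} [RCLike 𝕜] [NormedAddCommGroup E] [InnerProductSpace 𝕜 E]
  [FiniteDimensional 𝕜 E] {n : ℕ} (hn : Module.finrank 𝕜 E = n)

theorem re_inner_exp_ofReal_smul_apply_self {T : E →L[𝕜] E}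
    (hT : (T : E →ₗ[𝕜] E).IsSymmetric) (t : ℝ) (v : E) :
    RCLike.re (inner 𝕜 (exp ((t : 𝕜) • T) v) v) =
      ∑ i, ‖inner 𝕜 (hT.eigenvectorBasis hn i) v‖ ^ 2 * Real.exp (t * hT.eigenvalues hn i) := by
  have := FiniteDimensional.complete 𝕜 E
  set b := hT.eigenvectorBasis hn
  have hexp : exp ((t : 𝕜) • T) v =
      ∑ i, (inner 𝕜 (b i) v * (Real.exp (t * hT.eigenvalues hn i) : 𝕜)) • b i := by
    conv_lhs => rw [← b.sum_repr' v, map_sum]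
    refine Finset.sum_congr rfl fun i _ => ?_
    rw [map_smul, T.exp_ofReal_smul_apply_of_apply_eq_smul (hT.apply_eigenvectorBasis hn i),
      smul_smul]
  rw [hexp, sum_inner, map_sum]
  refine Finset.sum_congr rfl fun i _ => ?_
  rw [inner_smul_left, map_mul (starRingEnd 𝕜), RCLike.conj_ofReal, mul_right_comm,
    RCLike.conj_mul, ← RCLike.ofReal_pow, ← RCLike.ofReal_mul, RCLike.ofReal_re]

theorem mem_iSup_eigenspace_iff {T : E →ₗ[𝕜] E} (hT : T.IsSymmetric) (p : ℝ → Prop) (v : E) :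
    v ∈ ⨆ (μ : ℝ) (_ : p μ), eigenspace T (μ : 𝕜) ↔
      ∀ i, inner 𝕜 (hT.eigenvectorBasis hn i) v ≠ 0 → p (hT.eigenvalues hn i) := by
  set b := hT.eigenvectorBasis hn
  have hb : ∀ i, b i ∈ eigenspace T (hT.eigenvalues hn i : 𝕜) := fun i =>
    mem_eigenspace_iff.mpr (hT.apply_eigenvectorBasis hn i)
  constructor
  · intro hv i hi
    by_contra hp
    refine hi (Submodule.mem_orthogonal_singleton_iff_inner_right.mp ?_)
    refine (iSup₂_le fun μ hμ => ?_ : _ ≤ (𝕜 ∙ b i)ᗮ) hv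
    intro w hw
    have hne : (hT.eigenvalues hn i : 𝕜) ≠ μ := by
      rw [Ne, RCLike.ofReal_inj]
      rintro rfl
      exact hp hμ
    exact Submodule.mem_orthogonal_singleton_iff_inner_right.mpr
      (hT.orthogonalFamily_eigenspaces hne ⟨b i, hb i⟩ ⟨w, hw⟩)
  · intro h
    rw [← b.sum_repr' v]
    refine Submodule.sum_mem _ fun i _ => ?_
    by_cases hi : inner 𝕜 (b i) v = 0
    · simp [hi]
    · exact Submodule.smul_mem _ _ (Submodule.mem_iSup_of_mem (hT.eigenvalues hn i)
        (Submodule.mem_iSup_of_mem (h i hi) (hb i)))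

end LinearMap.IsSymmetric

/-- Let `V` be a finite-dimensional complex inner product space, `A` a
self-adjoint endomorphism of `V`, and `χ_A` the limit non-Archimedean norm of the
associated geodesic ray: `χ_A(v) = -lim_{t→∞} (1/t) log ⟨exp(-tA) v, v⟩` for `v ≠ 0`,
`χ_A(0) = +∞`.  Then for every `λ ∈ ℝ`, the set `{v : χ_A(v) ≥ λ}` equals the sum of the
eigenspaces of `A` for eigenvalues `μ ≥ λ`. -/
theorem statement4 {V : Type*} [NormedAddCommGroup V] [InnerProductSpace ℂ V]
    [FiniteDimensional ℂ V]
    (A : V →L[ℂ] V) (hA : ∀ x y : V, (inner ℂ (A x) y : ℂ) = inner ℂ x (A y))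
    (χ : V → EReal) (hχ0 : χ 0 = ⊤)
    (hχ : ∀ v : V, v ≠ 0 →
      Filter.Tendsto
        (fun t : ℝ =>
          ((-((1 / t) *
            Real.log ((inner ℂ ((NormedSpace.exp ((-(t : ℂ)) • A)) v) v : ℂ).re)) : ℝ) :
            EReal))
        Filter.atTop (nhds (χ v))) :
    ∀ lam : ℝ,
      {v : V | (lam : EReal) ≤ χ v} =
        ↑(⨆ (μ : ℝ) (_ : lam ≤ μ), Module.End.eigenspace (A : V →ₗ[ℂ] V) (μ : ℂ)) := by
  intro lam
  have hT : (A : V →ₗ[ℂ] V).IsSymmetric := hA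
  have hn : Module.finrank ℂ V = Module.finrank ℂ V := rfl
  ext v
  refine Iff.trans ?_ (hT.mem_iSup_eigenspace_iff hn (lam ≤ ·) v).symm
  set b := hT.eigenvectorBasis hn
  set α := hT.eigenvalues hn
  rcases eq_or_ne v 0 with rfl | hv
  · simp [hχ0]
  set w : Fin _ → ℝ := fun i => ‖inner ℂ (b i) v‖ ^ 2
  obtain ⟨i, hi⟩ : ∃ i, inner ℂ (b i) v ≠ 0 := by
    by_contra! h
    exact hv (by rw [← b.sum_repr' v]; simp [h])
  obtain ⟨i₀, hi₀, hmin⟩ := Set.exists_min_image {i | w i ≠ 0} α (Set.toFinite _)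
    ⟨i, by simpa [w] using hi⟩
  have hleast : IsLeast (α '' {i | w i ≠ 0}) (α i₀) :=
    ⟨⟨i₀, hi₀, rfl⟩, by rintro _ ⟨j, hj, rfl⟩; exact hmin j hj⟩
  have hχv : χ v = α i₀ := by
    refine tendsto_nhds_unique (hχ v hv) (EReal.tendsto_coe.mpr ?_)
    refine (tendsto_neg_inv_mul_log_sum_mul_exp (fun _ => by positivity) hleast).congr
      fun t => ?_
    rw [← Complex.ofReal_neg, ← hT.re_inner_exp_ofReal_smul_apply_self hn]
    rfl
  rw [Set.mem_ofPred_eq, hχv, EReal.coe_le_coe_iff, le_isGLB_iff hleast.isGLB, mem_lowerBounds]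
  simp [w]
end

section
/- Let V be a finite-dimensional complex inner product space and χ a non-Archimedean norm on V. Then there exists a self-adjoint endomorphism A of V such that for every nonzero v ∈ V, χ(v) = −lim_{t→∞} (1/t) · log ⟨exp(−tA) v, v⟩. -/
/-!
The superlevel sets `{χ ≥ r}` and `{χ > r}` are subspaces. Let `W r` be the orthogonal complement
of `{χ > r}` inside `{χ ≥ r}`. These pieces are mutually orthogonal, so only finitely many are
nonzero, and they span `V`: a vector `v` with `χ v = m` cannot be orthogonal to `W m`. Take for `A`
the operator acting on `W r` as multiplication by `r`. With `P r` the orthogonal projection onto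
`W r`, `⟨exp(-tA) v, v⟩ = ∑ r, exp(-tr) ‖P r v‖²`, where `P r v = 0` for `r < χ v` and
`P (χ v) v ≠ 0`; so the sum lies between two constant multiples of `exp(-t χ(v))`.
-/

/-- A non-Archimedean norm on a complex vector space `V` (with `ℂ` carrying the trivial
absolute value), written additively with values in `ℝ ∪ {±∞}`: `χ(v) = +∞` iff `v = 0`
(and `χ` never takes the value `-∞`), `χ(a • v) = χ(v)` for `a ≠ 0`, and
`χ(v + w) ≥ min (χ(v), χ(w))`. -/
def IsNonArchNorm {V : Type*} [AddCommGroup V] [Module ℂ V] (χ : V → EReal) : Prop :=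
  (∀ v : V, χ v ≠ ⊥) ∧ (∀ v : V, χ v = ⊤ ↔ v = 0) ∧
    (∀ a : ℂ, a ≠ 0 → ∀ v : V, χ (a • v) = χ v) ∧
    (∀ v w : V, min (χ v) (χ w) ≤ χ (v + w))

open Filter Topology

theorem exp_apply_of_apply_eq_smul {𝕜 E : Type*} [RCLike 𝕜] [NormedAddCommGroup E]
    [NormedSpace 𝕜 E] [CompleteSpace E] {B : E →L[𝕜] E} {μ : 𝕜} {w : E} (h : B w = μ • w) :
    NormedSpace.exp B w = NormedSpace.exp μ • w := by
  have hpow : ∀ n : ℕ, (B ^ n) w = μ ^ n • w := by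
    intro n
    induction n with
    | zero => simp
    | succ n ih =>
      rw [pow_succ, ContinuousLinearMap.mul_def, ContinuousLinearMap.comp_apply, h, map_smul, ih,
        smul_smul, pow_succ']
  have hB := (NormedSpace.exp_series_hasSum_exp' (𝕂 := 𝕜) B).mapL
    (ContinuousLinearMap.apply 𝕜 E w)
  have hμ := (NormedSpace.exp_series_hasSum_exp' (𝕂 := 𝕜) μ).smul_const w
  refine hB.unique (hμ.congr_fun fun n => ?_)
  simp [hpow, smul_smul]

theorem tendsto_neg_inv_mul_log_sum_exp {ι : Type*} [Fintype ι] (r c : ι → ℝ)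
    (hc : ∀ i, 0 ≤ c i) {j : ι} (hcj : 0 < c j) (hc_zero : ∀ i, r i < r j → c i = 0) :
    Tendsto (fun t : ℝ => -((1 / t) * Real.log (∑ i, Real.exp (-(t * r i)) * c i)))
      atTop (𝓝 (r j)) := by
  have hlim : ∀ K : ℝ, Tendsto (fun t : ℝ => r j - Real.log K / t) atTop (𝓝 (r j)) := fun K => by
    simpa using (tendsto_const_nhds (x := r j)).sub
      ((tendsto_const_nhds (x := Real.log K)).div_atTop tendsto_id)
  have hrewrite : ∀ t > 0, ∀ K > 0,
      -((1 / t) * Real.log (Real.exp (-(t * r j)) * K)) = r j - Real.log K / t := by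
    intro t ht K hK
    rw [Real.log_mul (Real.exp_pos _).ne' hK.ne', Real.log_exp]
    field_simp
    ring
  have hterm_le_sum : ∀ t, Real.exp (-(t * r j)) * c j ≤ ∑ i, Real.exp (-(t * r i)) * c i :=
    fun t => Finset.single_le_sum (f := fun i => Real.exp (-(t * r i)) * c i)
      (fun i _ => mul_nonneg (Real.exp_pos _).le (hc i)) (Finset.mem_univ j)
  have hsum_pos : 0 < ∑ i, c i :=
    hcj.trans_le (Finset.single_le_sum (fun i _ => hc i) (Finset.mem_univ j))
  refine tendsto_of_tendsto_of_tendsto_of_le_of_le' (hlim (∑ i, c i)) (hlim (c j)) ?_ ?_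
  · filter_upwards [eventually_gt_atTop 0] with t ht
    rw [← hrewrite t ht _ hsum_pos, neg_le_neg_iff]
    refine mul_le_mul_of_nonneg_left (Real.log_le_log ?_ ?_) (by positivity)
    · exact (mul_pos (Real.exp_pos _) hcj).trans_le (hterm_le_sum t)
    · rw [Finset.mul_sum]
      refine Finset.sum_le_sum fun i _ => ?_
      rcases lt_or_ge (r i) (r j) with hij | hij
      · simp [hc_zero i hij]
      · gcongr
        exact hc i
  · filter_upwards [eventually_gt_atTop 0] with t ht
    rw [← hrewrite t ht _ hcj, neg_le_neg_iff]
    exact mul_le_mul_of_nonneg_left (Real.log_le_log (by positivity) (hterm_le_sum t))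
      (by positivity)

section DiagonalOperator

variable {V ι : Type*} [NormedAddCommGroup V] [InnerProductSpace ℂ V] [Fintype ι]
  (W : ι → Submodule ℂ V) [∀ i, CompleteSpace (W i)]

noncomputable def diagonalOperator (μ : ι → ℝ) : V →L[ℂ] V :=
  ∑ i, (μ i : ℂ) • (W i).starProjection

theorem isSymmetric_diagonalOperator [CompleteSpace V] (μ : ι → ℝ) :
    (diagonalOperator W μ : V →ₗ[ℂ] V).IsSymmetric :=
  ContinuousLinearMap.isSelfAdjoint_iff_isSymmetric.mp <| isSelfAdjoint_sum _ fun i _ =>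
    .smul (Complex.conj_ofReal (μ i)) (isSelfAdjoint_starProjection (W i))

variable {W}

theorem diagonalOperator_apply_of_mem
    (hW : OrthogonalFamily ℂ (fun i => W i) fun i => (W i).subtypeₗᵢ) (μ : ι → ℝ) {i : ι}
    {w : V} (hw : w ∈ W i) : diagonalOperator W μ w = (μ i : ℂ) • w := by
  rw [diagonalOperator, sum_apply, Finset.sum_eq_single i, smul_apply,
    Submodule.starProjection_eq_self_iff.mpr hw]
  · intro j _ hji
    rw [smul_apply, (Submodule.starProjection_apply_eq_zero_iff _).mpr
      (hW.isOrtho hji.symm hw), smul_zero]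
  · simp

theorem exp_smul_diagonalOperator_apply [CompleteSpace V]
    (hW : OrthogonalFamily ℂ (fun i => W i) fun i => (W i).subtypeₗᵢ) (hW_top : ⨆ i, W i = ⊤)
    (μ : ι → ℝ) (c : ℂ) (v : V) :
    NormedSpace.exp (c • diagonalOperator W μ) v =
      ∑ i, Complex.exp (c * μ i) • (W i).starProjection v := by
  conv_lhs => rw [← hW.sum_projection_of_mem_iSup v (hW_top ▸ Submodule.mem_top), map_sum]
  refine Finset.sum_congr rfl fun i _ => ?_
  rw [Complex.exp_eq_exp_ℂ]
  refine exp_apply_of_apply_eq_smul ?_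
  rw [smul_apply, diagonalOperator_apply_of_mem hW μ (Submodule.starProjection_apply_mem _ v),
    smul_smul]

theorem re_inner_exp_neg_smul_diagonalOperator_apply_self [CompleteSpace V]
    (hW : OrthogonalFamily ℂ (fun i => W i) fun i => (W i).subtypeₗᵢ) (hW_top : ⨆ i, W i = ⊤)
    (μ : ι → ℝ) (t : ℝ) (v : V) :
    (inner ℂ (NormedSpace.exp ((-(t : ℂ)) • diagonalOperator W μ) v) v).re =
      ∑ i, Real.exp (-(t * μ i)) * ‖(W i).starProjection v‖ ^ 2 := by
  rw [exp_smul_diagonalOperator_apply hW hW_top, sum_inner, Complex.re_sum]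
  refine Finset.sum_congr rfl fun i _ => ?_
  have hexp : Complex.exp (-(t : ℂ) * μ i) = (Real.exp (-(t * μ i)) : ℂ) := by
    push_cast
    ring_nf
  rw [inner_smul_left, hexp, Complex.conj_ofReal, Complex.re_ofReal_mul]
  simpa using congrArg (Real.exp (-(t * μ i)) * ·)
    (Submodule.re_inner_starProjection_eq_normSq (W i) v)

end DiagonalOperator

namespace IsNonArchNorm

section Filtration

variable {V : Type*} [AddCommGroup V] [Module ℂ V] {χ : V → EReal}

theorem exists_eq_coe (hχ : IsNonArchNorm χ) {v : V} (hv : v ≠ 0) : ∃ m : ℝ, χ v = m :=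
  ⟨(χ v).toReal, (EReal.coe_toReal (mt (hχ.2.1 v).mp hv) (hχ.1 v)).symm⟩

theorem apply_zero (hχ : IsNonArchNorm χ) : χ 0 = ⊤ := (hχ.2.1 0).mpr rfl

def superlevel (hχ : IsNonArchNorm χ) (s : Set EReal) (hs : IsUpperSet s) (htop : ⊤ ∈ s) :
    Submodule ℂ V where
  carrier := {v | χ v ∈ s}
  zero_mem' := by simpa [hχ.apply_zero] using htop
  add_mem' {v w} hv hw :=
    hs (hχ.2.2.2 v w) (by rcases min_choice (χ v) (χ w) with h | h <;> rw [h] <;> assumption)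
  smul_mem' a v hv := by
    rcases eq_or_ne a 0 with rfl | ha
    · simpa [hχ.apply_zero] using htop
    · simpa [hχ.2.2.1 a ha v] using hv

theorem mem_superlevel (hχ : IsNonArchNorm χ) {s : Set EReal} {hs : IsUpperSet s}
    {htop : ⊤ ∈ s} {v : V} : v ∈ hχ.superlevel s hs htop ↔ χ v ∈ s :=
  Iff.rfl

end Filtration

section GradedPieces

variable {V : Type*} [NormedAddCommGroup V] [InnerProductSpace ℂ V] {χ : V → EReal}

noncomputable def gradedPiece (hχ : IsNonArchNorm χ) (r : ℝ) : Submodule ℂ V :=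
  hχ.superlevel (Set.Ici (r : EReal)) (isUpperSet_Ici _) (Set.mem_Ici.mpr le_top) ⊓
    (hχ.superlevel (Set.Ioi (r : EReal)) (isUpperSet_Ioi _) (EReal.coe_lt_top r))ᗮ

variable (hχ : IsNonArchNorm χ)

theorem isOrtho_gradedPiece_of_lt {r s : ℝ} (h : r < s) :
    hχ.gradedPiece r ⟂ hχ.gradedPiece s :=
  (Submodule.isOrtho_orthogonal_left _).mono inf_le_right fun _ hv => hχ.mem_superlevel.mpr <|
    (EReal.coe_lt_coe_iff.mpr h).trans_le (hχ.mem_superlevel.mp (Submodule.mem_inf.mp hv).1)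

theorem orthogonalFamily_gradedPiece :
    OrthogonalFamily ℂ (fun r => hχ.gradedPiece r) fun r => (hχ.gradedPiece r).subtypeₗᵢ :=
  OrthogonalFamily.of_pairwise fun r s hrs => by
    rcases hrs.lt_or_gt with h | h
    · exact hχ.isOrtho_gradedPiece_of_lt h
    · exact (hχ.isOrtho_gradedPiece_of_lt h).symm

theorem mem_orthogonal_gradedPiece_of_lt {r : ℝ} {v : V} (h : (r : EReal) < χ v) :
    v ∈ (hχ.gradedPiece r)ᗮ :=
  Submodule.orthogonal_le inf_le_right <| Submodule.le_orthogonal_orthogonal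
    (hχ.superlevel (Set.Ioi (r : EReal)) (isUpperSet_Ioi _) (EReal.coe_lt_top r))
    (hχ.mem_superlevel.mpr h)

theorem notMem_orthogonal_gradedPiece [FiniteDimensional ℂ V] {v : V} {m : ℝ}
    (hv : χ v = m) : v ∉ (hχ.gradedPiece m)ᗮ := by
  intro hv_perp
  set U := hχ.superlevel (Set.Ioi (m : EReal)) (isUpperSet_Ioi _) (EReal.coe_lt_top m)
  set u := v - U.starProjection v
  have hPv : U.starProjection v ∈ U := U.starProjection_apply_mem v
  have hu : u ∈ hχ.gradedPiece m :=
    Submodule.mem_inf.mpr ⟨sub_mem (hχ.mem_superlevel.mpr hv.ge)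
      (hχ.mem_superlevel.mpr (Set.mem_Ici.mpr (hχ.mem_superlevel.mp hPv).le)),
      U.sub_starProjection_mem_orthogonal v⟩
  have hu_zero : u = 0 := by
    refine inner_self_eq_zero (𝕜 := ℂ).mp ?_
    rw [inner_sub_right, Submodule.inner_right_of_mem_orthogonal hu hv_perp,
      Submodule.inner_left_of_mem_orthogonal hPv (U.sub_starProjection_mem_orthogonal v),
      sub_zero]
  have hvU : v ∈ U := sub_eq_zero.mp hu_zero ▸ hPv
  have hmv : (m : EReal) < χ v := hχ.mem_superlevel.mp hvU
  exact hmv.ne hv.symm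

theorem orthogonal_iSup_gradedPiece [FiniteDimensional ℂ V] :
    (⨆ r, hχ.gradedPiece r)ᗮ = ⊥ := by
  refine (Submodule.eq_bot_iff _).mpr fun v hv => by_contra fun hv0 => ?_
  obtain ⟨m, hm⟩ := hχ.exists_eq_coe hv0
  exact hχ.notMem_orthogonal_gradedPiece hm
    (Submodule.orthogonal_le (le_iSup (fun r => hχ.gradedPiece r) m) hv)

end GradedPieces

end IsNonArchNorm

/-- Let `V` be a finite-dimensional complex inner product space and
`χ` a non-Archimedean norm on `V`.  Then there exists a self-adjoint endomorphism `A`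
of `V` such that for every nonzero `v ∈ V`,
`χ(v) = -lim_{t→∞} (1/t) log ⟨exp(-tA) v, v⟩`. -/
theorem statement6 {V : Type*} [NormedAddCommGroup V] [InnerProductSpace ℂ V]
    [FiniteDimensional ℂ V]
    (χ : V → EReal) (hχ : IsNonArchNorm χ) :
    ∃ A : V →L[ℂ] V,
      (∀ x y : V, (inner ℂ (A x) y : ℂ) = inner ℂ x (A y)) ∧
      ∀ v : V, v ≠ 0 →
        Filter.Tendsto
          (fun t : ℝ =>
            ((-((1 / t) *
              Real.log ((inner ℂ ((NormedSpace.exp ((-(t : ℂ)) • A)) v) v : ℂ).re)) : ℝ) :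
              EReal))
          Filter.atTop (nhds (χ v)) := by
  have hW := hχ.orthogonalFamily_gradedPiece
  let ι := {r // hχ.gradedPiece r ≠ ⊥}
  let : Fintype ι := hW.independent.fintypeNeBotOfFiniteDimensional
  have hW_top : ⨆ r : ι, hχ.gradedPiece r = ⊤ := by
    rw [iSup_ne_bot_subtype, ← Submodule.orthogonal_eq_bot_iff, hχ.orthogonal_iSup_gradedPiece]
  refine ⟨diagonalOperator (fun r : ι => hχ.gradedPiece r) Subtype.val,
    isSymmetric_diagonalOperator _ _, fun v hv => ?_⟩
  obtain ⟨m, hm⟩ := hχ.exists_eq_coe hv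
  have hv_perp := hχ.notMem_orthogonal_gradedPiece hm
  have hm_ne_bot : hχ.gradedPiece m ≠ ⊥ := fun h => hv_perp <| by
    rw [h, Submodule.bot_orthogonal_eq_top]
    exact Submodule.mem_top
  let j : ι := ⟨m, hm_ne_bot⟩
  have hpos : 0 < ‖(hχ.gradedPiece j).starProjection v‖ ^ 2 :=
    pow_pos (norm_pos_iff.mpr (mt (Submodule.starProjection_apply_eq_zero_iff _).mp hv_perp)) 2
  have hvanish : ∀ r : ι, r.1 < j.1 → ‖(hχ.gradedPiece r).starProjection v‖ ^ 2 = 0 :=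
    fun r hr => by
      simp [(Submodule.starProjection_apply_eq_zero_iff _).mpr
        (hχ.mem_orthogonal_gradedPiece_of_lt (hm ▸ EReal.coe_lt_coe_iff.mpr hr))]
  have hlim := tendsto_neg_inv_mul_log_sum_exp (ι := ι) (j := j) Subtype.val
    (fun r => ‖(hχ.gradedPiece r).starProjection v‖ ^ 2) (fun _ => sq_nonneg _) hpos hvanish
  rw [hm]
  refine EReal.tendsto_coe.mpr (hlim.congr fun t => ?_)
  exact congrArg (fun x => -((1 / t) * Real.log x))
    (re_inner_exp_neg_smul_diagonalOperator_apply_self (hW.comp Subtype.val_injective)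
      hW_top _ t v).symm
end
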